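/- arXiv:math/0607453 — 6 statements merged into one kernel-verified Lean document; each statement's English description precedes it below -/
import Mathlib

section
/- Let N ≥ q ≥ 1 be integers and let π : [q]^[q] × Inj(q,N) → [N]^[q] be the map (s,a) ↦ a∘s, where Inj(q,N) is the set of injections from [q] to [N]. Then π is surjective and for any b ∈ [N]^[q], the cardinality of the fiber π⁻¹({b}) equals (N-|b|)_{q-|b|} · (q)_{|b|}, where |b| denotes the cardinality of the image of b and (n)_k = n!/(n-k)! is the falling factorial. -/
/-!
Since `a` is injective, `a ∘ s = b` determines `s`, and such an `s` exists iff
`range b ⊆ range a`; so the fibre over `b` is the set of injections whose image contains the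
`k`-element set `range b`, `k = |b|`. Such an injection is a choice of preimages of `range b`, an
injection `range b ↪ [q]` (`(q)_k` choices), together with an injection of the remaining `q - k`
points into the `N - k` points outside `range b` (`(N-k)_{q-k}` choices). Positivity of this count
for `q ≤ N` gives surjectivity.
-/

open Function

section

variable {α β γ : Type*}

noncomputable def Function.Embedding.equivSigmaRestrictCompl (σ : γ ↪ α) :
    (α ↪ β) ≃ Σ g : γ ↪ β, ↥(Set.range σ)ᶜ ↪ ↥(Set.range g)ᶜ :=
  letI := Classical.decPred (· ∈ Set.range σ)
  (Equiv.embeddingCongr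
      ((Equiv.sumCongr (Equiv.ofInjective σ σ.injective) (Equiv.refl _)).trans
        (Equiv.Set.sumCompl _)).symm (Equiv.refl β)).trans
    Equiv.sumEmbeddingEquivSigmaEmbeddingRestricted

theorem Function.Embedding.equivSigmaRestrictCompl_fst (σ : γ ↪ α) (f : α ↪ β) :
    (σ.equivSigmaRestrictCompl f).1 = σ.trans f :=
  rfl

theorem Fintype.card_embedding_extending [Fintype α] [Fintype β] [Fintype γ]
    (σ : γ ↪ α) (ι : γ ↪ β) [Fintype {f : α ↪ β // σ.trans f = ι}] :
    Fintype.card {f : α ↪ β // σ.trans f = ι} =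
      (card β - card γ).descFactorial (card α - card γ) := by
  classical
  calc Fintype.card {f : α ↪ β // σ.trans f = ι}
      = Fintype.card (↥(Set.range σ)ᶜ ↪ ↥(Set.range ι)ᶜ) :=
        Fintype.card_congr <|
          (σ.equivSigmaRestrictCompl.subtypeEquiv fun f => by
              rw [σ.equivSigmaRestrictCompl_fst]).trans (Equiv.sigmaSubtype ι)
    _ = _ := by
        simp only [card_embedding_eq, card_compl_set, Fintype.card_range]

noncomputable def Function.Embedding.rangeSupsetEquivSigma (ι : γ ↪ β) :
    {a : α ↪ β // Set.range ι ⊆ Set.range a} ≃ Σ σ : γ ↪ α, {a : α ↪ β // σ.trans a = ι} where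
  toFun a :=
    ⟨(ι.codRestrict _ (Set.range_subset_iff.1 a.2)).trans
        (Equiv.ofInjective a.1 a.1.injective).symm.toEmbedding,
      a.1, by ext x; exact Equiv.apply_ofInjective_symm a.1.injective _⟩
  invFun p := ⟨p.2.1, Set.range_subset_iff.2 fun x => ⟨p.1 x, DFunLike.congr_fun p.2.2 x⟩⟩
  left_inv _ := rfl
  right_inv := by
    rintro ⟨σ, a, rfl⟩
    refine Sigma.subtype_ext ?_ rfl
    ext x
    exact Equiv.ofInjective_symm_apply a.injective (σ x)

theorem Fintype.card_embedding_range_supset [Fintype α] [Fintype β] [Fintype γ] (ι : γ ↪ β)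
    [Fintype {a : α ↪ β // Set.range ι ⊆ Set.range a}] :
    Fintype.card {a : α ↪ β // Set.range ι ⊆ Set.range a} =
      (card β - card γ).descFactorial (card α - card γ) * (card α).descFactorial (card γ) := by
  classical
  rw [Fintype.card_congr ι.rangeSupsetEquivSigma, Fintype.card_sigma]
  simp only [card_embedding_extending, Finset.sum_const, Finset.card_univ, card_embedding_eq,
    smul_eq_mul, mul_comm]

noncomputable def embeddingCompFiberEquiv (b : γ → β) :
    {sa : (γ → α) × (α ↪ β) // ⇑sa.2 ∘ sa.1 = b} ≃
      {a : α ↪ β // Set.range (Embedding.subtype (· ∈ Set.range b)) ⊆ Set.range a} where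
  toFun sa := ⟨sa.1.2, by
    rintro _ ⟨⟨_, i, rfl⟩, rfl⟩
    exact ⟨sa.1.1 i, congrFun sa.2 i⟩⟩
  invFun a :=
    ⟨(fun i => (Equiv.ofInjective a.1 a.1.injective).symm ⟨b i, a.2 ⟨⟨b i, i, rfl⟩, rfl⟩⟩, a.1),
      funext fun i => Equiv.apply_ofInjective_symm a.1.injective _⟩
  left_inv := by
    rintro ⟨⟨s, a⟩, rfl⟩
    refine Subtype.ext (Prod.ext (funext fun i => ?_) rfl)
    exact Equiv.ofInjective_symm_apply a.injective (s i)
  right_inv _ := rfl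

theorem Fintype.card_embedding_comp_fiber [Fintype α] [Fintype β] [Fintype γ] [DecidableEq β]
    (b : γ → β) [Fintype {sa : (γ → α) × (α ↪ β) // ⇑sa.2 ∘ sa.1 = b}] :
    Fintype.card {sa : (γ → α) × (α ↪ β) // ⇑sa.2 ∘ sa.1 = b} =
      (card β - (Finset.univ.image b).card).descFactorial (card α - (Finset.univ.image b).card) *
        (card α).descFactorial (Finset.univ.image b).card := by
  classical
  rw [Fintype.card_congr (embeddingCompFiberEquiv b), card_embedding_range_supset,
    ← Set.toFinset_card, Set.toFinset_range]

theorem surjective_embedding_comp [Fintype α] [Fintype β] (h : Fintype.card α ≤ Fintype.card β) :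
    Surjective fun sa : (α → α) × (α ↪ β) => ⇑sa.2 ∘ sa.1 := by
  classical
  intro b
  have hk : (Finset.univ.image b).card ≤ Fintype.card α := Finset.card_image_le
  have hpos : 0 < Fintype.card {sa : (α → α) × (α ↪ β) // ⇑sa.2 ∘ sa.1 = b} := by
    rw [Fintype.card_embedding_comp_fiber]
    exact Nat.mul_pos (Nat.descFactorial_pos.2 (by omega)) (Nat.descFactorial_pos.2 hk)
  obtain ⟨sa, hsa⟩ := Fintype.card_pos_iff.1 hpos
  exact ⟨sa, hsa⟩

end

theorem stmt_0_general (q N : ℕ) (hqN : q ≤ N) :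
    Function.Surjective
        (fun sa : (Fin q → Fin q) × (Fin q ↪ Fin N) => (sa.2 : Fin q → Fin N) ∘ sa.1) ∧
      ∀ b : Fin q → Fin N,
        Fintype.card {sa : (Fin q → Fin q) × (Fin q ↪ Fin N) //
            (sa.2 : Fin q → Fin N) ∘ sa.1 = b} =
          (N - (Finset.univ.image b).card).descFactorial (q - (Finset.univ.image b).card) *
            q.descFactorial (Finset.univ.image b).card := by
  refine ⟨surjective_embedding_comp (by simpa using hqN), fun b => ?_⟩
  simpa using Fintype.card_embedding_comp_fiber (α := Fin q) b

/-- For `N ≥ q ≥ 1`, the map `π : [q]^[q] × Inj(q,N) → [N]^[q]`,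
`(s,a) ↦ a ∘ s`, is surjective, and the fiber over any `b : [q] → [N]` has cardinality
`(N-|b|)_{q-|b|} · (q)_{|b|}`, where `|b|` is the cardinality of the image of `b`. -/
theorem stmt_0 (q N : ℕ) (hq : 1 ≤ q) (hqN : q ≤ N) :
    Function.Surjective
        (fun sa : (Fin q → Fin q) × (Fin q ↪ Fin N) => (sa.2 : Fin q → Fin N) ∘ sa.1) ∧
      ∀ b : Fin q → Fin N,
        Fintype.card {sa : (Fin q → Fin q) × (Fin q ↪ Fin N) //
            (sa.2 : Fin q → Fin N) ∘ sa.1 = b} =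
          (N - (Finset.univ.image b).card).descFactorial (q - (Finset.univ.image b).card) *
            q.descFactorial (Finset.univ.image b).card :=
  stmt_0_general q N hqN
end

section
/- For integers p < q and N ≥ q, the number of injections from [q] to [N] whose image contains a fixed subset of [N] of cardinality p equals (q)_p · (N-p)_{q-p}, where (n)_k denotes the falling factorial n!/(n-k)!. -/
/-!
An injection `f : [q] ↪ [N]` whose image contains `S` determines the injection `g : S ↪ [q]`
sending each point of `S` to its preimage, and there are `(q)_p` such `g`. Conversely, for fixed
`g` the injections `f` with `f ∘ g = id_S` are exactly the injections of the `q - p` positions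
outside the range of `g` into the `N - p` points outside `S`, of which there are `(N-p)_{q-p}`.
-/

open Finset

namespace Function.Embedding

variable {α β γ : Type*}

open Classical in
/-- Splitting `α` as `γ ⊕ (range g)ᶜ` along `g`, an embedding of `α` becomes its restriction
`g.trans f` together with an embedding of the complement avoiding the range of that restriction. -/
noncomputable def equivSigmaRestrict (g : γ ↪ α) :
    (α ↪ β) ≃ Σ e : γ ↪ β, ↥(Set.range g)ᶜ ↪ ↥(Set.range e)ᶜ :=
  (Equiv.embeddingCongr
      ((Equiv.sumCongr (Equiv.ofInjective g g.injective) (Equiv.refl _)).trans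
        (Equiv.Set.sumCompl _)).symm (Equiv.refl β)).trans
    Equiv.sumEmbeddingEquivSigmaEmbeddingRestricted

theorem equivSigmaRestrict_fst (g : γ ↪ α) (f : α ↪ β) :
    (equivSigmaRestrict g f).1 = g.trans f := by
  ext c
  simp [equivSigmaRestrict, Equiv.sumEmbeddingEquivSigmaEmbeddingRestricted,
    Equiv.prodEmbeddingDisjointEquivSigmaEmbeddingRestricted,
    Equiv.sumEmbeddingEquivProdEmbeddingDisjoint, Equiv.subtypeProdEquivSigmaSubtype]

theorem natCard_trans_eq [Fintype α] [Fintype β] [Fintype γ] (g : γ ↪ α) (e : γ ↪ β) :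
    Nat.card {f : α ↪ β // g.trans f = e} =
      (Fintype.card β - Fintype.card γ).descFactorial (Fintype.card α - Fintype.card γ) := by
  classical
  have hfiber :
      {f : α ↪ β // g.trans f = e} ≃ (↥(Set.range g)ᶜ ↪ ↥(Set.range e)ᶜ) :=
    ((equivSigmaRestrict g).subtypeEquiv fun f => by rw [equivSigmaRestrict_fst]).trans
      (Equiv.sigmaSubtype e)
  rw [Nat.card_congr hfiber, Nat.card_eq_fintype_card, Fintype.card_embedding_eq,
    Fintype.card_compl_set, Fintype.card_compl_set, Set.card_range_of_injective g.injective,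
    Set.card_range_of_injective e.injective]

/-- The section `x.1` is unique because `x.2` is injective. -/
noncomputable def equivSectionOver (S : Finset β) :
    {x : (S ↪ α) × (α ↪ β) // x.1.trans x.2 = Embedding.subtype (· ∈ S)} ≃
      {f : α ↪ β // (S : Set β) ⊆ Set.range f} where
  toFun x := ⟨x.1.2, fun b hb => ⟨x.1.1 ⟨b, hb⟩, DFunLike.congr_fun x.2 ⟨b, hb⟩⟩⟩
  invFun f := ⟨((Set.embeddingOfSubset _ _ f.2).trans
      (Equiv.ofInjective f.1 f.1.injective).symm.toEmbedding, f.1), by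
    ext s
    simp only [Embedding.trans_apply, Equiv.coe_toEmbedding, Equiv.apply_ofInjective_symm]
    rfl⟩
  left_inv := by
    rintro ⟨⟨g, f⟩, hgf⟩
    refine Subtype.ext (Prod.ext ?_ rfl)
    ext s
    apply f.injective
    simp only [Embedding.trans_apply, Equiv.coe_toEmbedding, Equiv.apply_ofInjective_symm]
    exact (DFunLike.congr_fun hgf s).symm
  right_inv f := rfl

theorem natCard_range_superset [Fintype α] [Fintype β] (S : Finset β) :
    Nat.card {f : α ↪ β // (S : Set β) ⊆ Set.range f} =
      (Fintype.card α).descFactorial #S *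
        (Fintype.card β - #S).descFactorial (Fintype.card α - #S) := by
  rw [← Nat.card_congr (equivSectionOver S), Nat.card_congr (Equiv.subtypeProdEquivSigmaSubtype
    fun (g : S ↪ α) (f : α ↪ β) => g.trans f = Embedding.subtype (· ∈ S)), Nat.card_sigma]
  simp only [natCard_trans_eq, Fintype.card_coe, Finset.sum_const, Finset.card_univ,
    Fintype.card_embedding_eq, smul_eq_mul]

end Function.Embedding

theorem stmt_1_general (p q N : ℕ)
    (S : Finset (Fin N)) (hS : S.card = p) :
    Fintype.card {f : Fin q ↪ Fin N // S ⊆ Finset.univ.map f} =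
      q.descFactorial p * (N - p).descFactorial (q - p) := by
  have hcover (f : Fin q ↪ Fin N) : S ⊆ univ.map f ↔ (S : Set (Fin N)) ⊆ Set.range f := by
    rw [← Finset.coe_subset, Finset.coe_map, Finset.coe_univ, Set.image_univ]
  rw [Fintype.card_eq_nat_card, Nat.card_congr (Equiv.subtypeEquivRight hcover),
    Function.Embedding.natCard_range_superset, hS, Fintype.card_fin, Fintype.card_fin]

/-- For `p < q ≤ N`, the number of injections from `[q]` to `[N]`
whose image contains a fixed subset `S ⊆ [N]` of cardinality `p` equals
`(q)_p · (N-p)_{q-p}` (falling factorials). -/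
theorem stmt_1 (p q N : ℕ) (hpq : p < q) (hqN : q ≤ N)
    (S : Finset (Fin N)) (hS : S.card = p) :
    Fintype.card {f : Fin q ↪ Fin N // S ⊆ Finset.univ.map f} =
      q.descFactorial p * (N - p).descFactorial (q - p) :=
  stmt_1_general p q N S hS
end

section
/- Let E be a measurable space, N ≥ q ≥ 1 integers, and x = (x¹,...,x^N) ∈ E^N. Define m(x)^{⊗q} = N^{-q} Σ_{a∈[N]^[q]} δ_{(x^{a(1)},...,x^{a(q)})} and m(x)^{⊙q} = ((N)_q)^{-1} Σ_{a∈Inj(q,N)} δ_{(x^{a(1)},...,x^{a(q)})} as measures on E^q. Then m(x)^{⊗q} = m(x)^{⊙q} D_{L^N_q}, where L^N_q = N^{-q} Σ_{a∈[q]^[q]} ((N)_{|a|}/(q)_{|a|}) a in the monoid algebra of [q]^[q], and D_b is the Markov operator on bounded functions defined by D_b(F)(x¹,...,x^q) = F(x^{b(1)},...,x^{b(q)}), extended linearly. -/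
open MeasureTheory Finset
open scoped ENNReal NNReal

private lemma exists_perm_comp {k M : ℕ} (e₁ e₂ : Fin k ↪ Fin M) :
    ∃ σ : Equiv.Perm (Fin M), ∀ j, σ (e₁ j) = e₂ j := by
  classical
  let E : {x // x ∈ Set.range e₁} ≃ {x // x ∈ Set.range e₂} :=
    (Equiv.ofInjective e₁ e₁.injective).symm.trans (Equiv.ofInjective e₂ e₂.injective)
  refine ⟨Equiv.extendSubtype E, fun j => ?_⟩
  have hx : e₁ j ∈ Set.range e₁ := ⟨j, rfl⟩
  rw [Equiv.extendSubtype_apply_of_mem E (e₁ j) hx]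
  have h1 : (Equiv.ofInjective e₁ e₁.injective).symm ⟨e₁ j, hx⟩ = j :=
    Equiv.ofInjective_symm_apply e₁.injective j
  simp only [E, Equiv.trans_apply, h1, Equiv.ofInjective_apply]

private lemma card_fiber_trans {k m M : ℕ} (g : Fin k ↪ Fin m) (e : Fin k ↪ Fin M) :
    #(filter (fun a : Fin m ↪ Fin M => g.trans a = e) univ) * M.descFactorial k
      = M.descFactorial m := by
  classical
  have hconst : ∀ e' : Fin k ↪ Fin M,
      #(filter (fun a : Fin m ↪ Fin M => g.trans a = e') univ)
        = #(filter (fun a : Fin m ↪ Fin M => g.trans a = e) univ) := by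
    intro e'
    obtain ⟨σ, hσ⟩ := exists_perm_comp e' e
    refine Finset.card_bij' (fun a _ => a.trans σ.toEmbedding)
      (fun a _ => a.trans σ.symm.toEmbedding) ?_ ?_ ?_ ?_
    · intro a ha
      simp only [mem_filter, mem_univ, true_and] at ha ⊢
      refine Function.Embedding.ext fun j => ?_
      have h2 : a (g j) = e' j := DFunLike.congr_fun ha j
      simp only [Function.Embedding.trans_apply, Equiv.coe_toEmbedding, h2, hσ j]
    · intro a ha
      simp only [mem_filter, mem_univ, true_and] at ha ⊢
      refine Function.Embedding.ext fun j => ?_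
      have h2 : a (g j) = e j := DFunLike.congr_fun ha j
      simp only [Function.Embedding.trans_apply, Equiv.coe_toEmbedding, h2, ← hσ j,
        Equiv.symm_apply_apply]
    · intro a _; refine Function.Embedding.ext fun i => ?_; simp
    · intro a _; refine Function.Embedding.ext fun i => ?_; simp
  have htot : #(univ : Finset (Fin m ↪ Fin M))
      = ∑ e' : Fin k ↪ Fin M, #(filter (fun a : Fin m ↪ Fin M => g.trans a = e') univ) :=
    Finset.card_eq_sum_card_fiberwise (fun x _ => mem_univ _)
  rw [Finset.card_univ, Fintype.card_embedding_eq, Fintype.card_fin, Fintype.card_fin] at htot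
  calc #(filter (fun a : Fin m ↪ Fin M => g.trans a = e) univ) * M.descFactorial k
      = ∑ e' : Fin k ↪ Fin M, #(filter (fun a : Fin m ↪ Fin M => g.trans a = e') univ) := by
        rw [Finset.sum_congr rfl (fun e' _ => hconst e'), Finset.sum_const, Finset.card_univ,
          Fintype.card_embedding_eq, Fintype.card_fin, Fintype.card_fin, smul_eq_mul, mul_comm]
    _ = M.descFactorial m := htot.symm

private lemma card_pair_fiber {N q : ℕ} (hq : 1 ≤ q) (c : Fin q → Fin N) :
    #(filter (fun p : (Fin q → Fin q) × (Fin q ↪ Fin N) =>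
        (fun i => p.2 (p.1 i)) = c) univ)
      * N.descFactorial (univ.image c).card
    = q.descFactorial (univ.image c).card * N.descFactorial q := by
  classical
  haveI : Nonempty (Fin q) := ⟨⟨0, hq⟩⟩
  set S : Finset (Fin N) := univ.image c with hS
  set k : ℕ := S.card with hk
  let e : Fin k ↪ Fin N := (S.orderEmbOfFin rfl).toEmbedding
  have hrange : Set.range e = ↑S := S.range_orderEmbOfFin rfl
  have hcS : ∀ i, c i ∈ S := fun i => mem_image_of_mem c (mem_univ i)
  have he_mem : ∀ j, e j ∈ S := by
    intro j
    have : e j ∈ Set.range e := ⟨j, rfl⟩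
    rw [hrange] at this
    exact this
  have hcard : #(filter (fun p : (Fin q → Fin q) × (Fin q ↪ Fin N) =>
        (fun i => p.2 (p.1 i)) = c) univ)
      = #(filter (fun p : (Fin k ↪ Fin q) × (Fin q ↪ Fin N) =>
        p.1.trans p.2 = e) univ) := by
    refine Finset.card_bij'
      (fun p hp => (⟨fun j => Function.invFun p.2 (e j), ?_⟩, p.2))
      (fun p hp => (fun i => Function.invFun p.2 (c i), p.2)) ?_ ?_ ?_ ?_
    · -- injectivity of the forward first component
      simp only [mem_filter, mem_univ, true_and] at hp
      have hinv : ∀ y ∈ S, p.2 (Function.invFun p.2 y) = y := by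
        intro y hy
        obtain ⟨i, _, hi⟩ := mem_image.mp hy
        exact Function.invFun_eq ⟨p.1 i, show p.2 (p.1 i) = y from (congrFun hp i).trans hi⟩
      intro j j' hjj
      have h3 := congrArg p.2 hjj
      rw [hinv _ (he_mem j), hinv _ (he_mem j')] at h3
      exact e.injective h3
    · -- maps to
      intro p hp
      simp only [mem_filter, mem_univ, true_and] at hp ⊢
      have hinv : ∀ y ∈ S, p.2 (Function.invFun p.2 y) = y := by
        intro y hy
        obtain ⟨i, _, hi⟩ := mem_image.mp hy
        exact Function.invFun_eq ⟨p.1 i, show p.2 (p.1 i) = y from (congrFun hp i).trans hi⟩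
      refine Function.Embedding.ext fun j => ?_
      exact hinv _ (he_mem j)
    · -- reverse maps to
      intro p hp
      simp only [mem_filter, mem_univ, true_and] at hp ⊢
      funext i
      have hmem : c i ∈ Set.range e := by rw [hrange]; exact_mod_cast hcS i
      obtain ⟨j, hj⟩ := hmem
      exact Function.invFun_eq ⟨p.1 j,
        show p.2 (p.1 j) = c i from (DFunLike.congr_fun hp j).trans hj⟩
    · -- left inverse
      intro p hp
      simp only [mem_filter, mem_univ, true_and] at hp
      refine Prod.ext ?_ rfl
      funext i
      show Function.invFun p.2 (c i) = p.1 i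
      have h4 : c i = p.2 (p.1 i) := (congrFun hp i).symm
      rw [h4]
      exact Function.leftInverse_invFun p.2.injective (p.1 i)
    · -- right inverse
      intro p hp
      simp only [mem_filter, mem_univ, true_and] at hp
      refine Prod.ext ?_ rfl
      refine Function.Embedding.ext fun j => ?_
      show Function.invFun p.2 (e j) = p.1 j
      have h4 : e j = p.2 (p.1 j) := (DFunLike.congr_fun hp j).symm
      rw [h4]
      exact Function.leftInverse_invFun p.2.injective (p.1 j)
  rw [hcard]
  have hQ : #(filter (fun p : (Fin k ↪ Fin q) × (Fin q ↪ Fin N) => p.1.trans p.2 = e) univ)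
      = ∑ g : Fin k ↪ Fin q, #(filter (fun a : Fin q ↪ Fin N => g.trans a = e) univ) := by
    rw [Finset.card_filter, Fintype.sum_prod_type]
    exact Finset.sum_congr rfl fun g _ => (Finset.card_filter _ _).symm
  rw [hQ, Finset.sum_mul, Finset.sum_congr rfl (fun g _ => card_fiber_trans g e),
    Finset.sum_const, Finset.card_univ, Fintype.card_embedding_eq, Fintype.card_fin,
    Fintype.card_fin, smul_eq_mul]

/-- For `x ∈ E^N` and `q ≤ N`, the tensor product empirical measure
`m(x)^{⊗q}` equals `m(x)^{⊙q} D_{L^N_q}`, where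
`L^N_q = N^{-q} Σ_{b ∈ [q]^[q]} ((N)_{|b|}/(q)_{|b|}) b`, and for a map `b` the Markov
operator `D_b` acts on measures as the pushforward by `y ↦ y ∘ b` (extended linearly to
the monoid algebra). -/
theorem stmt_6 {E : Type*} [MeasurableSpace E] (N q : ℕ) (hq : 1 ≤ q) (hqN : q ≤ N)
    (x : Fin N → E) :
    (((N : ℝ≥0∞) ^ q)⁻¹ •
        ∑ a : Fin q → Fin N, Measure.dirac (fun i => x (a i))) =
      ∑ b : Fin q → Fin q,
        (((N : ℝ≥0∞) ^ q)⁻¹ *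
            ((N.descFactorial (Finset.univ.image b).card : ℝ≥0∞) /
              (q.descFactorial (Finset.univ.image b).card : ℝ≥0∞))) •
          Measure.map (fun y : Fin q → E => y ∘ b)
            (((N.descFactorial q : ℝ≥0∞))⁻¹ •
              ∑ a : Fin q ↪ Fin N, Measure.dirac (fun i => x (a i))) := by
  have hφ : ∀ b : Fin q → Fin q, Measurable (fun y : Fin q → E => y ∘ b) :=
    fun b => measurable_pi_lambda _ fun i => measurable_pi_apply (b i)
  have hmap : ∀ b : Fin q → Fin q,
      Measure.map (fun y : Fin q → E => y ∘ b)
        (((N.descFactorial q : ℝ≥0∞))⁻¹ •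
          ∑ a : Fin q ↪ Fin N, Measure.dirac (fun i => x (a i)))
      = ((N.descFactorial q : ℝ≥0∞))⁻¹ •
          ∑ a : Fin q ↪ Fin N, Measure.dirac (fun i => x (a (b i))) := by
    intro b
    rw [Measure.map_smul]
    congr 1
    have key : ∀ s : Finset (Fin q ↪ Fin N),
        Measure.map (fun y : Fin q → E => y ∘ b)
            (∑ a ∈ s, Measure.dirac (fun i => x (a i)))
          = ∑ a ∈ s, Measure.dirac (fun i => x (a (b i))) := by
      intro s
      induction s using Finset.induction_on with
      | empty => simp
      | insert _ _ h ih =>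
          rw [Finset.sum_insert h, Measure.map_add _ _ (hφ b), ih, Finset.sum_insert h,
            Measure.map_dirac' (hφ b)]
          rfl
    exact key univ
  calc (((N : ℝ≥0∞) ^ q)⁻¹ • ∑ a : Fin q → Fin N, Measure.dirac (fun i => x (a i)))
      = ∑ c : Fin q → Fin N, ((N : ℝ≥0∞) ^ q)⁻¹ • Measure.dirac (fun i => x (c i)) :=
        Finset.smul_sum
    _ = ∑ p : (Fin q → Fin q) × (Fin q ↪ Fin N),
          ((((N : ℝ≥0∞) ^ q)⁻¹ *
            ((N.descFactorial (Finset.univ.image p.1).card : ℝ≥0∞) /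
              (q.descFactorial (Finset.univ.image p.1).card : ℝ≥0∞)) *
            ((N.descFactorial q : ℝ≥0∞))⁻¹) •
            Measure.dirac (fun i => x (p.2 (p.1 i)))) := by
        rw [← Finset.sum_fiberwise univ (fun p : (Fin q → Fin q) × (Fin q ↪ Fin N) =>
          (fun i => p.2 (p.1 i))) _]
        refine Finset.sum_congr rfl fun c _ => ?_
        set k : ℕ := (Finset.univ.image c).card with hk
        have hterm : ∀ p ∈ filter (fun p : (Fin q → Fin q) × (Fin q ↪ Fin N) =>
            (fun i => p.2 (p.1 i)) = c) univ,
            ((((N : ℝ≥0∞) ^ q)⁻¹ *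
              ((N.descFactorial (Finset.univ.image p.1).card : ℝ≥0∞) /
                (q.descFactorial (Finset.univ.image p.1).card : ℝ≥0∞)) *
              ((N.descFactorial q : ℝ≥0∞))⁻¹) •
              Measure.dirac (fun i => x (p.2 (p.1 i))))
            = ((((N : ℝ≥0∞) ^ q)⁻¹ *
              ((N.descFactorial k : ℝ≥0∞) / (q.descFactorial k : ℝ≥0∞)) *
              ((N.descFactorial q : ℝ≥0∞))⁻¹) •
              Measure.dirac (fun i => x (c i))) := by
          intro p hp
          simp only [mem_filter, mem_univ, true_and] at hp
          have himg : (Finset.univ.image p.1).card = k := by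
            rw [hk, ← hp]
            have h5 : (univ.image fun i => p.2 (p.1 i)) = (univ.image p.1).image p.2 :=
              (Finset.image_image).symm
            rw [h5, Finset.card_image_of_injective _ p.2.injective]
          rw [himg, show (fun i => x (p.2 (p.1 i))) = fun i => x (c i) from
            funext fun i => congrArg x (congrFun hp i)]
        rw [Finset.sum_congr rfl hterm, ← Finset.sum_smul, Finset.sum_const, nsmul_eq_mul]
        congr 1
        -- scalar identity
        have hkq : k ≤ q := le_trans (Finset.card_image_le) (by simp)
        have hA : (#(filter (fun p : (Fin q → Fin q) × (Fin q ↪ Fin N) =>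
            (fun i => p.2 (p.1 i)) = c) univ) : ℝ≥0∞) * (N.descFactorial k : ℝ≥0∞)
            = (q.descFactorial k : ℝ≥0∞) * (N.descFactorial q : ℝ≥0∞) := by
          exact_mod_cast congrArg (Nat.cast (R := ℝ≥0∞)) (card_pair_fiber hq c)
        have hqk0 : (q.descFactorial k : ℝ≥0∞) ≠ 0 :=
          Nat.cast_ne_zero.2 fun h =>
            absurd (Nat.descFactorial_eq_zero_iff_lt.mp h) (not_lt.2 hkq)
        have hNq0 : (N.descFactorial q : ℝ≥0∞) ≠ 0 :=
          Nat.cast_ne_zero.2 fun h =>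
            absurd (Nat.descFactorial_eq_zero_iff_lt.mp h) (not_lt.2 hqN)
        have hqkt : (q.descFactorial k : ℝ≥0∞) ≠ ∞ := ENNReal.natCast_ne_top _
        have hNqt : (N.descFactorial q : ℝ≥0∞) ≠ ∞ := ENNReal.natCast_ne_top _
        calc ((N : ℝ≥0∞) ^ q)⁻¹
            = ((N : ℝ≥0∞) ^ q)⁻¹ *
                (((q.descFactorial k : ℝ≥0∞) * (q.descFactorial k : ℝ≥0∞)⁻¹) *
                ((N.descFactorial q : ℝ≥0∞) * (N.descFactorial q : ℝ≥0∞)⁻¹)) := by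
              rw [ENNReal.mul_inv_cancel hqk0 hqkt, ENNReal.mul_inv_cancel hNq0 hNqt,
                one_mul, mul_one]
          _ = ((N : ℝ≥0∞) ^ q)⁻¹ *
                (((q.descFactorial k : ℝ≥0∞) * (N.descFactorial q : ℝ≥0∞)) *
                ((q.descFactorial k : ℝ≥0∞)⁻¹ * (N.descFactorial q : ℝ≥0∞)⁻¹)) := by ring
          _ = ((N : ℝ≥0∞) ^ q)⁻¹ *
                (((#(filter (fun p : (Fin q → Fin q) × (Fin q ↪ Fin N) =>
                  (fun i => p.2 (p.1 i)) = c) univ) : ℝ≥0∞) * (N.descFactorial k : ℝ≥0∞)) *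
                ((q.descFactorial k : ℝ≥0∞)⁻¹ * (N.descFactorial q : ℝ≥0∞)⁻¹)) := by rw [hA]
          _ = (#(filter (fun p : (Fin q → Fin q) × (Fin q ↪ Fin N) =>
                (fun i => p.2 (p.1 i)) = c) univ) : ℝ≥0∞) *
                (((N : ℝ≥0∞) ^ q)⁻¹ *
                  ((N.descFactorial k : ℝ≥0∞) / (q.descFactorial k : ℝ≥0∞)) *
                  ((N.descFactorial q : ℝ≥0∞))⁻¹) := by
              rw [div_eq_mul_inv]; ring
    _ = ∑ b : Fin q → Fin q, ∑ a : Fin q ↪ Fin N,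
          ((((N : ℝ≥0∞) ^ q)⁻¹ *
            ((N.descFactorial (Finset.univ.image b).card : ℝ≥0∞) /
              (q.descFactorial (Finset.univ.image b).card : ℝ≥0∞)) *
            ((N.descFactorial q : ℝ≥0∞))⁻¹) •
            Measure.dirac (fun i => x (a (b i)))) := Fintype.sum_prod_type _
    _ = ∑ b : Fin q → Fin q,
        (((N : ℝ≥0∞) ^ q)⁻¹ *
            ((N.descFactorial (Finset.univ.image b).card : ℝ≥0∞) /
              (q.descFactorial (Finset.univ.image b).card : ℝ≥0∞))) •
          Measure.map (fun y : Fin q → E => y ∘ b)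
            (((N.descFactorial q : ℝ≥0∞))⁻¹ •
              ∑ a : Fin q ↪ Fin N, Measure.dirac (fun i => x (a i))) := by
        refine Finset.sum_congr rfl fun b _ => ?_
        rw [hmap b, smul_smul, Finset.smul_sum]
end

section
/- With L^N_q = N^{-q} Σ_{a∈[q]^[q]} ((N)_{|a|}/(q)_{|a|}) a in the monoid algebra of maps [q] → [q], one has the Laurent expansion L^N_q = Σ_{k=0}^{q-1} N^{-k} ∂^k L_q, where ∂^k L_q = Σ_{p=q-k}^{q} s(p,q-k) · (1/(q)_p) · Σ_{a∈[q]^[q]_p} a, and s(p,j) are signed Stirling numbers of the first kind. -/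
/-- Unsigned Stirling numbers of the first kind. -/
def stirlingFstUnsigned : ℕ → ℕ → ℕ
  | 0, 0 => 1
  | 0, _ + 1 => 0
  | _ + 1, 0 => 0
  | n + 1, k + 1 => n * stirlingFstUnsigned n (k + 1) + stirlingFstUnsigned n k

/-- Signed Stirling numbers of the first kind. -/
def stirlingFst (n k : ℕ) : ℤ := (-1) ^ (n - k) * stirlingFstUnsigned n k

/-- The element `L^N_q = N^{-q} Σ_{a ∈ [q]^[q]} ((N)_{|a|}/(q)_{|a|}) a` of the monoid
algebra (formal linear combinations of maps `[q] → [q]` with rational coefficients). -/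
noncomputable def LNq (N q : ℕ) : (Fin q → Fin q) →₀ ℚ :=
  ∑ a : Fin q → Fin q,
    Finsupp.single a
      (((N : ℚ) ^ q)⁻¹ *
        ((N.descFactorial (Finset.univ.image a).card : ℚ) /
          (q.descFactorial (Finset.univ.image a).card : ℚ)))

/-- `∂^k L_q = Σ_{p=q-k}^{q} s(p,q-k) (1/(q)_p) Σ_{a ∈ [q]^[q]_p} a`. -/
noncomputable def dLq (q k : ℕ) : (Fin q → Fin q) →₀ ℚ :=
  ∑ p ∈ Finset.Icc (q - k) q,
    ∑ a ∈ Finset.univ.filter (fun a : Fin q → Fin q => (Finset.univ.image a).card = p),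
      Finsupp.single a ((stirlingFst p (q - k) : ℚ) / (q.descFactorial p : ℚ))

/-!
Coefficientwise, at a map `a` with `|a| = p`, the claim is the expansion of the falling factorial
`(N)_p = Σ_j s(p,j) N^j`: dividing by `N^q` and putting `k = q - j` gives
`N^{-q} (N)_p = Σ_k s(p, q-k) N^{-k}`, where `k = q` drops out because `s(p,0) = 0` for `p ≥ 1`
and the terms with `q - k > p` vanish. The expansion itself is read off from the coefficients of
`descPochhammer ℤ p`, which satisfy the signed Stirling recursion.
-/

open Finset Polynomial

theorem stirlingFstUnsigned_eq_stirlingFirst :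
    ∀ n k, stirlingFstUnsigned n k = Nat.stirlingFirst n k
  | 0, 0 => rfl
  | 0, _ + 1 => rfl
  | _ + 1, 0 => rfl
  | n + 1, k + 1 => by
    rw [stirlingFstUnsigned, Nat.stirlingFirst_succ_succ,
      stirlingFstUnsigned_eq_stirlingFirst n, stirlingFstUnsigned_eq_stirlingFirst n]

theorem stirlingFst_eq_zero_of_lt {n k : ℕ} (h : n < k) : stirlingFst n k = 0 := by
  simp [stirlingFst, stirlingFstUnsigned_eq_stirlingFirst, Nat.stirlingFirst_eq_zero_of_lt h]

theorem stirlingFst_succ_zero (n : ℕ) : stirlingFst (n + 1) 0 = 0 := by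
  simp [stirlingFst, stirlingFstUnsigned_eq_stirlingFirst]

theorem stirlingFst_succ_succ (n k : ℕ) :
    stirlingFst (n + 1) (k + 1) = stirlingFst n k - n * stirlingFst n (k + 1) := by
  rcases lt_or_ge k n with hk | hk
  · obtain ⟨m, rfl⟩ := Nat.exists_eq_add_of_lt hk
    simp only [stirlingFst, stirlingFstUnsigned_eq_stirlingFirst, Nat.stirlingFirst_succ_succ,
      show k + m + 1 + 1 - (k + 1) = m + 1 by omega, show k + m + 1 - k = m + 1 by omega,
      show k + m + 1 - (k + 1) = m by omega]
    push_cast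
    ring
  · simp [stirlingFst, stirlingFstUnsigned_eq_stirlingFirst, Nat.stirlingFirst_succ_succ,
      Nat.stirlingFirst_eq_zero_of_lt (Nat.lt_succ_of_le hk), Nat.sub_eq_zero_of_le hk]

theorem coeff_descPochhammer_int (n k : ℕ) : (descPochhammer ℤ n).coeff k = stirlingFst n k := by
  induction n generalizing k with
  | zero => cases k <;> simp [stirlingFst, stirlingFstUnsigned, coeff_one]
  | succ n ih =>
    cases k with
    | zero =>
      rw [coeff_zero_eq_eval_zero, descPochhammer_ne_zero_eval_zero _ n.succ_ne_zero,
        stirlingFst_succ_zero]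
    | succ k =>
      rw [descPochhammer_succ_right, ← map_natCast C, coeff_mul_X_sub_C, ih, ih,
        stirlingFst_succ_succ]
      ring

theorem descPochhammer_eval_eq_sum_stirlingFst {R : Type*} [CommRing R] {p n : ℕ} (hpn : p < n)
    (x : R) : (descPochhammer R p).eval x = ∑ j ∈ range n, (stirlingFst p j : R) * x ^ j := by
  rw [← descPochhammer_map (Int.castRingHom R), eval_map,
    eval₂_eq_sum_range' _ (by rwa [descPochhammer_natDegree])]
  simp [coeff_descPochhammer_int]

theorem inv_pow_mul_descPochhammer_eval {K : Type*} [Field K] {x : K} (hx : x ≠ 0) {p q : ℕ}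
    (hp : 1 ≤ p) (hpq : p ≤ q) :
    (x ^ q)⁻¹ * (descPochhammer K p).eval x =
      ∑ k ∈ range q, (x ^ k)⁻¹ * (stirlingFst p (q - k) : K) := by
  obtain ⟨p, rfl⟩ := Nat.exists_eq_add_of_le' hp
  rw [descPochhammer_eval_eq_sum_stirlingFst (Nat.lt_succ_of_le hpq), mul_sum,
    ← sum_range_reflect, sum_range_succ]
  simp only [Nat.succ_sub_one, Nat.sub_self, stirlingFst_succ_zero, Int.cast_zero, zero_mul,
    mul_zero, add_zero]
  refine sum_congr rfl fun k hk => ?_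
  rw [← pow_mul_pow_sub x (mem_range.mp hk).le]
  field_simp

theorem card_image_univ_le_of_fin {α : Type*} [Fintype α] {q : ℕ} (a : α → Fin q) :
    (univ.image a).card ≤ q := by
  simpa using card_le_univ (univ.image a)

theorem LNq_apply (N q : ℕ) (a : Fin q → Fin q) :
    LNq N q a = ((N : ℚ) ^ q)⁻¹ *
      ((N.descFactorial (univ.image a).card : ℚ) / (q.descFactorial (univ.image a).card : ℚ)) := by
  simp [LNq, Finsupp.finsetSum_apply, Finsupp.single_apply]

theorem dLq_apply (q k : ℕ) (a : Fin q → Fin q) :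
    dLq q k a = (stirlingFst (univ.image a).card (q - k) : ℚ) /
      (q.descFactorial (univ.image a).card : ℚ) := by
  simp only [dLq, Finsupp.finsetSum_apply, Finsupp.single_apply, sum_ite_eq', mem_filter,
    mem_univ, true_and, sum_ite_eq, mem_Icc, card_image_univ_le_of_fin, and_true]
  split_ifs with h
  · rfl
  · rw [stirlingFst_eq_zero_of_lt (not_le.mp h), Int.cast_zero, zero_div]

/-- Laurent expansion `L^N_q = Σ_{k=0}^{q-1} N^{-k} ∂^k L_q` in the
monoid algebra of self-maps of `[q]`. -/
theorem stmt_7 (q N : ℕ) (hq : 1 ≤ q) (hqN : q ≤ N) :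
    LNq N q = ∑ k ∈ Finset.range q, ((N : ℚ) ^ k)⁻¹ • dLq q k := by
  ext a
  have hN : (N : ℚ) ≠ 0 := by exact_mod_cast (by omega : N ≠ 0)
  have ha : 1 ≤ (univ.image a).card := card_pos.mpr ⟨a ⟨0, hq⟩, mem_image_of_mem a (mem_univ _)⟩
  simp only [LNq_apply, Finsupp.finsetSum_apply, Finsupp.smul_apply, dLq_apply, smul_eq_mul,
    ← mul_div_assoc, ← sum_div, ← descPochhammer_eval_eq_descFactorial,
    inv_pow_mul_descPochhammer_eval hN ha (card_image_univ_le_of_fin a)]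
end

section
/- For generic x ∈ E^N (pairwise distinct entries) and N ≥ q ≥ 1, the total variation distance satisfies N·‖m(x)^{⊗q} − m(x)^{⊙q}‖_tv = 2(N^q − (N)_q)/N^{q−1}, which converges to q(q−1) as N → ∞. -/
open MeasureTheory
open scoped ENNReal NNReal

open MeasureTheory Filter
open scoped ENNReal NNReal

lemma stmt9_vm_sum_apply {α : Type*} [MeasurableSpace α] {ι : Type*} (s : Finset ι)
    (f : ι → SignedMeasure α) (i : Set α) :
    (∑ a ∈ s, f a) i = ∑ a ∈ s, f a i := by
  induction s using Finset.cons_induction with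
  | empty => simp
  | cons a s ha ih => rw [Finset.sum_cons, VectorMeasure.add_apply, ih, Finset.sum_cons]

lemma stmt9_part1 {E : Type*} [MeasurableSpace E] [MeasurableSingletonClass E] (q : ℕ)
    (hq : 1 ≤ q) (N : ℕ) (hN : q ≤ N) (x : Fin N → E) (hx : Function.Injective x) :
    (N : ℝ≥0∞) *
        (((∑ a : Fin q → Fin N,
              (((N : ℝ) ^ q)⁻¹ • (Measure.dirac (fun i => x (a i))).toSignedMeasure)) -
            ∑ a : Fin q ↪ Fin N,
              (((N.descFactorial q : ℝ))⁻¹ •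
                (Measure.dirac (fun i => x (a i))).toSignedMeasure)).totalVariation
          Set.univ) =
      ENNReal.ofReal
        (2 * ((N : ℝ) ^ q - (N.descFactorial q : ℝ)) / (N : ℝ) ^ (q - 1)) := by
  classical
  have hN1 : 1 ≤ N := le_trans hq hN
  set D := N.descFactorial q with hD
  have hD0 : 0 < D := by
    rw [hD, Nat.descFactorial_eq_prod_range]
    exact Finset.prod_pos fun i hi => by
      have := Finset.mem_range.mp hi; omega
  have hDle : D ≤ N ^ q := Nat.descFactorial_le_pow N q
  have hX0 : 0 < N ^ q := Nat.pow_pos hN1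
  -- ENNReal scalars
  set c : ℝ≥0∞ := ((N ^ q : ℕ) : ℝ≥0∞)⁻¹ with hc
  set d : ℝ≥0∞ := ((D : ℕ) : ℝ≥0∞)⁻¹ with hd
  set e : ℝ≥0∞ := d - c with he
  have hcTop : c ≠ ⊤ := ENNReal.inv_ne_top.2 (by exact_mod_cast hX0.ne')
  have hdTop : d ≠ ⊤ := ENNReal.inv_ne_top.2 (by exact_mod_cast hD0.ne')
  have heTop : e ≠ ⊤ := ne_top_of_le_ne_top hdTop (by rw [he]; exact tsub_le_self)
  have hcd : c ≤ d := by
    rw [hc, hd]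
    exact ENNReal.inv_le_inv.2 (by exact_mod_cast hDle)
  -- sets of indices
  set sInj : Finset (Fin q → Fin N) :=
    Finset.univ.filter (fun a => Function.Injective a) with hsInj
  set sNon : Finset (Fin q → Fin N) :=
    Finset.univ.filter (fun a => ¬ Function.Injective a) with hsNon
  -- measures
  set μP : Measure (Fin q → E) :=
    ∑ a ∈ sNon, c • Measure.dirac (fun i => x (a i)) with hμP
  set μQ : Measure (Fin q → E) :=
    ∑ a ∈ sInj, e • Measure.dirac (fun i => x (a i)) with hμQ
  have hPuniv : μP Set.univ = (sNon.card : ℝ≥0∞) * c := by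
    rw [hμP, Measure.finset_sum_apply]
    simp [Measure.smul_apply, Finset.sum_const, mul_comm]
  have hQuniv : μQ Set.univ = (sInj.card : ℝ≥0∞) * e := by
    rw [hμQ, Measure.finset_sum_apply]
    simp [Measure.smul_apply, Finset.sum_const, mul_comm]
  haveI : IsFiniteMeasure μP :=
    ⟨by rw [hPuniv]; exact ENNReal.mul_lt_top (by simp) (lt_top_iff_ne_top.2 hcTop)⟩
  haveI : IsFiniteMeasure μQ :=
    ⟨by rw [hQuniv]; exact ENNReal.mul_lt_top (by simp) (lt_top_iff_ne_top.2 heTop)⟩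
  -- injectivity of a ↦ x ∘ a
  have hxq : Function.Injective (fun a : Fin q → Fin N => (fun i => x (a i))) := by
    intro a b h
    funext i
    exact hx (congrFun h i)
  -- mutual singularity
  set B : Set (Fin q → E) :=
    (fun a : Fin q → Fin N => fun i => x (a i)) '' {a | Function.Injective a} with hB
  have hBfin : B.Finite := Set.Finite.image _ (Set.toFinite _)
  have hsing : μP ⟂ₘ μQ := by
    refine ⟨B, hBfin.measurableSet, ?_, ?_⟩
    · rw [hμP, Measure.finset_sum_apply]
      refine Finset.sum_eq_zero fun a ha => ?_
      have ha' : ¬ Function.Injective a := by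
        rw [hsNon, Finset.mem_filter] at ha; exact ha.2
      have hnB : (fun i => x (a i)) ∉ B := by
        rintro ⟨b, hb, hba⟩
        have hba' : b = a := hxq hba
        exact ha' (hba' ▸ hb)
      simp [Measure.smul_apply, Measure.dirac_apply, Set.indicator_of_notMem hnB]
    · rw [hμQ, Measure.finset_sum_apply]
      refine Finset.sum_eq_zero fun a ha => ?_
      have ha' : Function.Injective a := by
        rw [hsInj, Finset.mem_filter] at ha; exact ha.2
      have hmB : (fun i => x (a i)) ∈ B := ⟨a, ha', rfl⟩
      simp [Measure.smul_apply, Measure.dirac_apply, Set.indicator_of_notMem, hmB]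
  set j : JordanDecomposition (Fin q → E) :=
    { posPart := μP, negPart := μQ, mutuallySingular := hsing } with hj
  -- toReal values of scalars
  have hcR : c.toReal = ((N : ℝ) ^ q)⁻¹ := by
    rw [hc, ENNReal.toReal_inv, ENNReal.toReal_natCast, Nat.cast_pow]
  have hdR : d.toReal = ((D : ℕ) : ℝ)⁻¹ := by
    rw [hd, ENNReal.toReal_inv]; simp
  have heR : e.toReal = ((D : ℕ) : ℝ)⁻¹ - ((N : ℝ) ^ q)⁻¹ := by
    rw [he, ENNReal.toReal_sub_of_le hcd hdTop, hcR, hdR]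
  -- the signed measure equals j.toSignedMeasure
  set S : SignedMeasure (Fin q → E) :=
    ((∑ a : Fin q → Fin N,
        (((N : ℝ) ^ q)⁻¹ • (Measure.dirac (fun i => x (a i))).toSignedMeasure)) -
      ∑ a : Fin q ↪ Fin N,
        (((N.descFactorial q : ℝ))⁻¹ •
          (Measure.dirac (fun i => x (a i))).toSignedMeasure)) with hSdef
  have hemb : ∀ F : (Fin q → Fin N) → ℝ,
      (∑ f : Fin q ↪ Fin N, F ⇑f) = ∑ a ∈ sInj, F a := by
    intro F
    calc ∑ f : Fin q ↪ Fin N, F ⇑f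
        = ∑ s : {a : Fin q → Fin N // Function.Injective a}, F s.1 :=
          (Fintype.sum_equiv (Equiv.subtypeInjectiveEquivEmbedding (Fin q) (Fin N))
            _ _ (fun s => rfl)).symm
      _ = ∑ a ∈ sInj, F a :=
          (Finset.sum_subtype _ (fun a => by simp [hsInj]) F).symm
  have hS : S = j.toSignedMeasure := by
    ext1 i hi
    rw [hSdef, VectorMeasure.sub_apply, stmt9_vm_sum_apply, stmt9_vm_sum_apply]
    have hjap : j.toSignedMeasure i = (μP i).toReal - (μQ i).toReal := by
      rw [hj, JordanDecomposition.toSignedMeasure]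
      exact Measure.toSignedMeasure_sub_apply hi
    rw [hjap]
    have hterm : ∀ a : Fin q → Fin N,
        ((((N : ℝ) ^ q)⁻¹ • (Measure.dirac (fun i_1 => x (a i_1))).toSignedMeasure) i)
          = ((N : ℝ) ^ q)⁻¹ * ((Measure.dirac (fun i_1 => x (a i_1)) : Measure (Fin q → E)) i).toReal := by
      intro a
      rw [VectorMeasure.smul_apply, Measure.toSignedMeasure_apply_measurable hi, smul_eq_mul]; rfl
    have hterm2 : ∀ f : Fin q ↪ Fin N,
        ((((N.descFactorial q : ℝ))⁻¹ • (Measure.dirac (fun i_1 => x (f i_1))).toSignedMeasure) i)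
          = ((D : ℕ) : ℝ)⁻¹ * ((Measure.dirac (fun i_1 => x (f i_1)) : Measure (Fin q → E)) i).toReal := by
      intro f
      rw [VectorMeasure.smul_apply, Measure.toSignedMeasure_apply_measurable hi, smul_eq_mul, hD]; rfl
    simp only [hterm, hterm2]
    set r : (Fin q → Fin N) → ℝ :=
      fun a => ((Measure.dirac (fun i_1 => x (a i_1)) : Measure (Fin q → E)) i).toReal with hr
    have hPi : (μP i).toReal = ∑ a ∈ sNon, c.toReal * r a := by
      rw [hμP, Measure.finset_sum_apply, ENNReal.toReal_sum]
      · exact Finset.sum_congr rfl fun a ha => by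
          rw [Measure.smul_apply, smul_eq_mul, ENNReal.toReal_mul]
      · exact fun a ha => ENNReal.mul_ne_top hcTop (measure_ne_top _ _)
    have hQi : (μQ i).toReal = ∑ a ∈ sInj, e.toReal * r a := by
      rw [hμQ, Measure.finset_sum_apply, ENNReal.toReal_sum]
      · exact Finset.sum_congr rfl fun a ha => by
          rw [Measure.smul_apply, smul_eq_mul, ENNReal.toReal_mul]
      · exact fun a ha => ENNReal.mul_ne_top heTop (measure_ne_top _ _)
    rw [hPi, hQi, hemb (fun a => ((D:ℕ):ℝ)⁻¹ * r a)]
    have hsplit : (∑ a : Fin q → Fin N, ((N : ℝ) ^ q)⁻¹ * r a)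
        = ∑ a ∈ sInj, ((N : ℝ) ^ q)⁻¹ * r a + ∑ a ∈ sNon, ((N : ℝ) ^ q)⁻¹ * r a := by
      rw [hsInj, hsNon]
      exact (Finset.sum_filter_add_sum_filter_not Finset.univ _ _).symm
    rw [hsplit]
    simp only [hcR, heR]
    rw [Finset.sum_congr rfl (fun a (_ : a ∈ sInj) => sub_mul (((D:ℕ):ℝ)⁻¹) (((N : ℝ) ^ q)⁻¹) (r a)),
      Finset.sum_sub_distrib]
    ring
  -- total variation computation
  have hTV : S.totalVariation = μP + μQ := by
    rw [hS]
    unfold SignedMeasure.totalVariation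
    rw [JordanDecomposition.toJordanDecomposition_toSignedMeasure, hj]
  -- cardinalities
  have hcardInj : sInj.card = D := by
    rw [hsInj, ← Fintype.card_subtype]
    rw [Fintype.card_congr (Equiv.subtypeInjectiveEquivEmbedding (Fin q) (Fin N))]
    rw [Fintype.card_embedding_eq, Fintype.card_fin, Fintype.card_fin, hD]
  have hcardNon : sNon.card = N ^ q - D := by
    have h := Finset.card_filter_add_card_filter_not
      (s := Finset.univ) (p := fun a : Fin q → Fin N => Function.Injective a)
    have hcu : (Finset.univ : Finset (Fin q → Fin N)).card = N ^ q := by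
      rw [Finset.card_univ, Fintype.card_fun, Fintype.card_fin, Fintype.card_fin]
    rw [← hsInj, ← hsNon] at h
    omega
  have hval : S.totalVariation Set.univ
      = ((N ^ q - D : ℕ) : ℝ≥0∞) * c + ((D : ℕ) : ℝ≥0∞) * e := by
    rw [hTV, Measure.add_apply, hPuniv, hQuniv, hcardInj, hcardNon]
  rw [hval]
  -- final ENNReal arithmetic
  have hfin : (N : ℝ≥0∞) * (((N ^ q - D : ℕ) : ℝ≥0∞) * c + ((D : ℕ) : ℝ≥0∞) * e) ≠ ⊤ := by
    apply ENNReal.mul_ne_top (by simp)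
    exact ENNReal.add_ne_top.2 ⟨ENNReal.mul_ne_top (by simp) hcTop, ENNReal.mul_ne_top (by simp) heTop⟩
  rw [← ENNReal.ofReal_toReal hfin]
  congr 1
  rw [ENNReal.toReal_mul, ENNReal.toReal_add (ENNReal.mul_ne_top (by simp) hcTop)
    (ENNReal.mul_ne_top (by simp) heTop), ENNReal.toReal_mul, ENNReal.toReal_mul,
    hcR, heR, ENNReal.toReal_natCast, ENNReal.toReal_natCast, ENNReal.toReal_natCast]
  have hcast1 : ((N ^ q - D : ℕ) : ℝ) = (N : ℝ) ^ q - (D : ℝ) := by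
    push_cast [Nat.cast_sub hDle]; ring
  rw [hcast1]
  obtain ⟨p, hp⟩ : ∃ p, q = p + 1 := ⟨q - 1, (Nat.succ_pred_eq_of_pos hq).symm⟩
  subst hp
  have hp1 : p + 1 - 1 = p := by omega
  rw [hp1]
  have hNne : (N : ℝ) ≠ 0 := by positivity
  have hDne : ((D : ℕ) : ℝ) ≠ 0 := by exact_mod_cast hD0.ne'
  field_simp
  ring

lemma stmt9_tendsto_aux (q : ℕ) :
    Tendsto (fun N : ℕ => (N : ℝ) * (1 - ∏ i ∈ Finset.range q, (1 - (i : ℝ) / N)))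
      atTop (nhds (∑ i ∈ Finset.range q, (i : ℝ))) := by
  induction q with
  | zero => simpa using (tendsto_const_nhds : Tendsto (fun _ : ℕ => (0:ℝ)) atTop _)
  | succ q ih =>
    have hN : Tendsto (fun N : ℕ => (N : ℝ)) atTop atTop := tendsto_natCast_atTop_atTop
    have h1 : ∀ i : ℕ, Tendsto (fun N : ℕ => 1 - (i : ℝ) / N) atTop (nhds 1) := by
      intro i
      have := Tendsto.div_atTop (tendsto_const_nhds (x := (i : ℝ))) hN
      simpa using (tendsto_const_nhds (x := (1 : ℝ))).sub this
    have hP : Tendsto (fun N : ℕ => ∏ i ∈ Finset.range q, (1 - (i : ℝ) / N)) atTop (nhds 1) := by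
      have := tendsto_finset_prod (Finset.range q) (fun i _ => h1 i)
      simpa using this
    have hlim := ih.add (hP.const_mul (q : ℝ))
    rw [mul_one] at hlim
    rw [Finset.sum_range_succ]
    refine Tendsto.congr' ?_ hlim
    filter_upwards [eventually_ge_atTop 1] with N hN1
    have hNne : (N : ℝ) ≠ 0 := by positivity
    rw [Finset.prod_range_succ]
    field_simp
    ring

lemma stmt9_part2 (q : ℕ) (hq : 1 ≤ q) :
    Tendsto (fun N : ℕ => 2 * ((N : ℝ) ^ q - (N.descFactorial q : ℝ)) / (N : ℝ) ^ (q - 1))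
      atTop (nhds ((q : ℝ) * ((q : ℝ) - 1))) := by
  obtain ⟨p, rfl⟩ : ∃ p, q = p + 1 := ⟨q - 1, (Nat.succ_pred_eq_of_pos hq).symm⟩
  have hsum : (2 : ℝ) * ∑ i ∈ Finset.range (p + 1), (i : ℝ) = ((p+1 : ℕ) : ℝ) * (((p+1:ℕ) : ℝ) - 1) := by
    have h := Finset.sum_range_id_mul_two (p + 1)
    have h2 : ((∑ i ∈ Finset.range (p+1), i : ℕ) : ℝ) * 2 = ((p+1 : ℕ) : ℝ) * ((p : ℕ) : ℝ) := by
      exact_mod_cast congrArg (Nat.cast : ℕ → ℝ) (by rw [h]; simp)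
    push_cast at h2 ⊢
    linarith
  have hlim := (stmt9_tendsto_aux (p + 1)).const_mul (2 : ℝ)
  rw [hsum] at hlim
  refine Tendsto.congr' ?_ hlim
  filter_upwards [eventually_ge_atTop (p + 1)] with N hN1
  have hNne : (N : ℝ) ≠ 0 := by
    have : 1 ≤ N := le_trans (Nat.le_add_left 1 p) hN1
    positivity
  have hcast : ((N.descFactorial (p+1) : ℕ) : ℝ) = ∏ i ∈ Finset.range (p+1), ((N : ℝ) - i) := by
    rw [Nat.descFactorial_eq_prod_range, Nat.cast_prod]
    refine Finset.prod_congr rfl fun i hi => ?_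
    have hi' : i ≤ N := by have := Finset.mem_range.mp hi; omega
    exact Nat.cast_sub (R := ℝ) hi'
  have hprod : ∏ i ∈ Finset.range (p+1), (1 - (i : ℝ) / N)
      = (∏ i ∈ Finset.range (p+1), ((N : ℝ) - i)) / (N : ℝ) ^ (p+1) := by
    rw [← Finset.card_range (p+1), ← Finset.prod_const (N : ℝ), Finset.card_range,
      ← Finset.prod_div_distrib]
    refine Finset.prod_congr rfl fun i hi => ?_
    field_simp
  show 2 * ((N:ℝ) * (1 - _)) = _
  rw [hprod, hcast]
  have hp1 : p + 1 - 1 = p := by omega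
  rw [hp1]
  have hpow : (N : ℝ) ^ (p+1) ≠ 0 := pow_ne_zero _ hNne
  field_simp
  ring

/-- For generic `x ∈ E^N` (pairwise distinct entries) and `N ≥ q ≥ 1`,
`N·‖m(x)^{⊗q} − m(x)^{⊙q}‖_tv = 2(N^q − (N)_q)/N^{q−1}`, and this quantity converges to
`q(q−1)` as `N → ∞`. -/
theorem stmt_9 {E : Type*} [MeasurableSpace E] [MeasurableSingletonClass E] (q : ℕ)
    (hq : 1 ≤ q) :
    (∀ (N : ℕ), q ≤ N → ∀ x : Fin N → E, Function.Injective x →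
      (N : ℝ≥0∞) *
        (((∑ a : Fin q → Fin N,
              (((N : ℝ) ^ q)⁻¹ • (Measure.dirac (fun i => x (a i))).toSignedMeasure)) -
            ∑ a : Fin q ↪ Fin N,
              (((N.descFactorial q : ℝ))⁻¹ •
                (Measure.dirac (fun i => x (a i))).toSignedMeasure)).totalVariation
          Set.univ) =
        ENNReal.ofReal
          (2 * ((N : ℝ) ^ q - (N.descFactorial q : ℝ)) / (N : ℝ) ^ (q - 1))) ∧
    Filter.Tendsto
      (fun N : ℕ => 2 * ((N : ℝ) ^ q - (N.descFactorial q : ℝ)) / (N : ℝ) ^ (q - 1))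
      Filter.atTop (nhds ((q : ℝ) * ((q : ℝ) - 1))) := by
  exact ⟨fun N hN x hx => stmt9_part1 q hq N hN x hx, stmt9_part2 q hq⟩
end

section
/- For any real u ≠ 1 and integers q ≥ 0, m ≥ 0, the identity 1/(1−u)^{q+1} = Σ_{k=0}^{m} ((q+k)!/(q!·k!)) u^k + u^m Σ_{k=1}^{q+1} C(q+1+m, k+m) (u/(1−u))^k holds, where C(·,·) denotes binomial coefficients. -/
/-!
Put `x = u / (1 - u)`, so that `1 / (1 - u) = 1 + x` and `u * (1 + x) = x`; only this relation
is needed, and the expansion holds in any commutative semiring. For `m = 0` it is the binomial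
theorem for `(1 + x) ^ (q + 1)`. Passing from `m` to `m + 1` peels the term `C(q+m+1, m+1) u^(m+1)`
off the remainder: Pascal's rule splits the new remainder sum into the old one plus a sum `T`,
and the old sum equals `x * (C(q+m+1, m+1) + T)` after an index shift, because the top binomial
coefficient vanishes. Then `u * (1 + x) = x` closes the step.
-/

open Finset

theorem Finset.sum_Icc_one_eq_sum_range {M : Type*} [AddCommMonoid M] (f : ℕ → M) (n : ℕ) :
    ∑ k ∈ Icc 1 n, f k = ∑ k ∈ range n, f (k + 1) := by
  rw [range_eq_Ico, sum_Ico_add' f 0 n 1, zero_add, Ico_add_one_right_eq_Icc]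

section CommSemiring

variable {R : Type*} [CommSemiring R]

theorem one_add_pow_eq_one_add_sum_Icc (x : R) (n : ℕ) :
    (1 + x) ^ n = 1 + ∑ k ∈ Icc 1 n, (n.choose k : R) * x ^ k := by
  rw [add_comm, add_pow, sum_range_succ', sum_Icc_one_eq_sum_range]
  simp [add_comm, mul_comm]

theorem sum_Icc_choose_succ_mul_pow (x : R) (n m p : ℕ) :
    ∑ k ∈ Icc 1 p, ((n + 1).choose (k + m + 1) : R) * x ^ k =
      ∑ k ∈ Icc 1 p, (n.choose (k + m) : R) * x ^ k +
        ∑ k ∈ Icc 1 p, (n.choose (k + m + 1) : R) * x ^ k := by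
  rw [← sum_add_distrib]
  refine sum_congr rfl fun k _ => ?_
  rw [Nat.choose_succ_succ', Nat.cast_add, add_mul]

theorem mul_choose_add_sum_Icc_choose_mul_pow (x : R) {n m p : ℕ} (hn : n ≤ p + m) :
    x * ((n.choose (m + 1) : R) + ∑ k ∈ Icc 1 p, (n.choose (k + m + 1) : R) * x ^ k) =
      ∑ k ∈ Icc 1 p, (n.choose (k + m) : R) * x ^ k := by
  have htop : n.choose (p + m + 1) = 0 := Nat.choose_eq_zero_of_lt (by omega)
  have hfull : (n.choose (m + 1) : R) + ∑ k ∈ Icc 1 p, (n.choose (k + m + 1) : R) * x ^ k =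
      ∑ k ∈ range p, (n.choose (k + m + 1) : R) * x ^ k := by
    calc _ = ∑ k ∈ range (p + 1), (n.choose (k + m + 1) : R) * x ^ k := by
          rw [sum_range_succ', sum_Icc_one_eq_sum_range]
          simp [add_comm]
      _ = _ := by simp [sum_range_succ, htop]
  rw [hfull, mul_sum, sum_Icc_one_eq_sum_range]
  refine sum_congr rfl fun k _ => ?_
  rw [pow_succ, Nat.add_right_comm k 1 m]
  ring

theorem sum_Icc_choose_mul_pow_eq_mul_choose_add {u x : R} (h : u * (1 + x) = x) (q m : ℕ) :
    ∑ k ∈ Icc 1 (q + 1), ((q + 1 + m).choose (k + m) : R) * x ^ k =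
      u * (((q + m + 1).choose (m + 1) : R) +
        ∑ k ∈ Icc 1 (q + 1), ((q + 1 + (m + 1)).choose (k + (m + 1)) : R) * x ^ k) := by
  rw [Nat.add_right_comm q 1 m]
  have hpascal := sum_Icc_choose_succ_mul_pow x (q + m + 1) m (q + 1)
  have hshift :=
    mul_choose_add_sum_Icc_choose_mul_pow x (n := q + m + 1) (m := m) (p := q + 1) (by omega)
  rw [show q + 1 + (m + 1) = q + m + 1 + 1 by omega]
  simp only [← add_assoc, hpascal]
  rw [← hshift]
  nth_rewrite 1 [← h]
  ring

theorem one_add_pow_eq_sum_add_remainder {u x : R} (h : u * (1 + x) = x) (q m : ℕ) :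
    (1 + x) ^ (q + 1) =
      ∑ k ∈ range (m + 1), ((q + k).choose k : R) * u ^ k +
        u ^ m * ∑ k ∈ Icc 1 (q + 1), ((q + 1 + m).choose (k + m) : R) * x ^ k := by
  induction m with
  | zero => simp [one_add_pow_eq_one_add_sum_Icc]
  | succ m ih =>
    rw [ih, sum_Icc_choose_mul_pow_eq_mul_choose_add h q m, sum_range_succ _ (m + 1), add_assoc]
    ring

end CommSemiring

theorem one_div_one_sub_pow_eq_sum_add_remainder {K : Type*} [Field K] {u : K} (hu : u ≠ 1)
    (q m : ℕ) :
    1 / (1 - u) ^ (q + 1) =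
      ∑ k ∈ range (m + 1), ((q + k).choose k : K) * u ^ k +
        u ^ m * ∑ k ∈ Icc 1 (q + 1), ((q + 1 + m).choose (k + m) : K) * (u / (1 - u)) ^ k := by
  have hu' : 1 - u ≠ 0 := sub_ne_zero.mpr hu.symm
  have hx : 1 + u / (1 - u) = 1 / (1 - u) := by field_simp; ring
  rw [← one_add_pow_eq_sum_add_remainder (by rw [hx]; field_simp), hx, one_div_pow]

/-- For real `u ≠ 1` and integers `q, m ≥ 0`,
`1/(1−u)^{q+1} = Σ_{k=0}^{m} ((q+k)!/(q!·k!)) u^k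
  + u^m Σ_{k=1}^{q+1} C(q+1+m, k+m) (u/(1−u))^k`. -/
theorem stmt_19 (u : ℝ) (hu : u ≠ 1) (q m : ℕ) :
    1 / (1 - u) ^ (q + 1) =
      (∑ k ∈ Finset.range (m + 1),
        (((q + k).factorial : ℝ) / ((q.factorial : ℝ) * (k.factorial : ℝ))) * u ^ k) +
      u ^ m * ∑ k ∈ Finset.Icc 1 (q + 1),
        ((q + 1 + m).choose (k + m) : ℝ) * (u / (1 - u)) ^ k := by
  have hcoeff (k : ℕ) :
      ((q + k).factorial : ℝ) / (q.factorial * k.factorial) = (q + k).choose k := by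
    rw [← Nat.cast_add_choose, Nat.choose_symm_add]
  simp only [hcoeff]
  exact one_div_one_sub_pow_eq_sum_add_remainder hu q m
end
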